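/- arXiv:2605.08508 — 3 statements merged into one kernel-verified Lean document; each statement's English description precedes it below -/
import Mathlib

section
/- Let G be a d-regular connected graph with adjacency matrix A such that for every ℓ ≥ 0 there is a constant C'_ℓ with (Aˡ)_{aa} + (Aˡ)_{bb} − 2(Aˡ)_{ab} = C'_ℓ for every edge ab. Then G is walk-regular: for each ℓ, the diagonal of Aˡ is a constant vector. -/
open Matrix

/-- If `G` is a `d`-regular connected graph such that for every `ℓ` the quantity
`(Aˡ)_{aa} + (Aˡ)_{bb} − 2(Aˡ)_{ab}` is constant over the edges, then `G` is
walk-regular: the diagonal of `Aˡ` is constant for every `ℓ`. -/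
theorem regular_edge_rigid_walk_regular
    {n : ℕ} (G : SimpleGraph (Fin n)) [DecidableRel G.Adj] (hG : G.Connected)
    (d : ℕ) (hreg : G.IsRegularOfDegree d)
    (h : ∀ ℓ : ℕ, ∃ C : ℝ, ∀ a b : Fin n, G.Adj a b →
        ((G.adjMatrix ℝ) ^ ℓ) a a + ((G.adjMatrix ℝ) ^ ℓ) b b
          - 2 * ((G.adjMatrix ℝ) ^ ℓ) a b = C) :
    ∀ ℓ : ℕ, ∃ c : ℝ, ∀ a : Fin n, ((G.adjMatrix ℝ) ^ ℓ) a a = c := by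
  intro ℓ
  induction ℓ with
  | zero => exact ⟨1, fun a => by simp⟩
  | succ ℓ ih =>
    obtain ⟨c, hc⟩ := ih
    obtain ⟨C, hC⟩ := h ℓ
    refine ⟨(2 * d * c - d * C) / 2, fun a => ?_⟩
    have hdiag : ((G.adjMatrix ℝ) ^ (ℓ + 1)) a a
        = ∑ b ∈ G.neighborFinset a, ((G.adjMatrix ℝ) ^ ℓ) a b := by
      rw [pow_succ, SimpleGraph.mul_adjMatrix_apply]
    have hcard : (G.neighborFinset a).card = d := by
      rw [SimpleGraph.card_neighborFinset_eq_degree]; exact hreg a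
    have hsum : ∑ b ∈ G.neighborFinset a,
        (((G.adjMatrix ℝ) ^ ℓ) a a + ((G.adjMatrix ℝ) ^ ℓ) b b
          - 2 * ((G.adjMatrix ℝ) ^ ℓ) a b) = ∑ _b ∈ G.neighborFinset a, C :=
      Finset.sum_congr rfl fun b hb => hC a b (by simpa using hb)
    have hL : ∑ b ∈ G.neighborFinset a,
        (((G.adjMatrix ℝ) ^ ℓ) a a + ((G.adjMatrix ℝ) ^ ℓ) b b
          - 2 * ((G.adjMatrix ℝ) ^ ℓ) a b)
        = (d : ℝ) * c + (d : ℝ) * c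
          - 2 * ∑ b ∈ G.neighborFinset a, ((G.adjMatrix ℝ) ^ ℓ) a b := by
      rw [Finset.sum_sub_distrib, Finset.sum_add_distrib, ← Finset.mul_sum]
      congr 1
      congr 1
      · rw [Finset.sum_const, hcard, hc a, nsmul_eq_mul]
      · rw [Finset.sum_congr rfl fun b _ => hc b, Finset.sum_const, hcard,
          nsmul_eq_mul]
    rw [Finset.sum_const, hcard, nsmul_eq_mul, hL, ← hdiag] at hsum
    linarith
end

section
/- For a symmetric positive semidefinite n×n matrix M and 1 ≤ k ≤ n, the sum of the k largest eigenvalues of M equals the maximum of tr(MX) over symmetric matrices X with 0 ⪯ X ⪯ I and tr(X) = k. -/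
open Matrix Finset

/-!
In an orthonormal eigenbasis of `M`, `tr (M X) = ∑ⱼ λⱼ yⱼ`, where the `yⱼ` are the diagonal
entries of `X` in that basis, and `0 ⪯ X ⪯ 1`, `tr X = k` force `0 ≤ yⱼ ≤ 1`, `∑ⱼ yⱼ = k`.
Over these weights, with `t` the `k`-th largest eigenvalue,
`λⱼ yⱼ ≤ t yⱼ + [j among the top k] (λⱼ - t)`, and summing cancels the `t`-terms.
The bound is attained by the orthogonal projection onto the top `k` eigenvectors.
-/

theorem Finset.sum_mul_le_sum_of_threshold {ι : Type*} [Fintype ι] [DecidableEq ι] (s : Finset ι)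
    {μ y : ι → ℝ} {t : ℝ} (hs : ∀ i ∈ s, t ≤ μ i) (hsc : ∀ i ∉ s, μ i ≤ t)
    (hy0 : ∀ i, 0 ≤ y i) (hy1 : ∀ i, y i ≤ 1) (hy : ∑ i, y i = #s) :
    ∑ i, μ i * y i ≤ ∑ i ∈ s, μ i := by
  have key (i : ι) : μ i * y i ≤ t * y i + if i ∈ s then μ i - t else 0 := by
    split_ifs with hi
    · nlinarith [hs i hi, hy1 i]
    · nlinarith [hsc i hi, hy0 i]
  calc ∑ i, μ i * y i ≤ ∑ i, (t * y i + if i ∈ s then μ i - t else 0) :=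
        sum_le_sum fun i _ ↦ key i
    _ = ∑ i ∈ s, μ i := by
        rw [sum_add_distrib, ← mul_sum, hy, sum_ite_mem, univ_inter, sum_sub_distrib, sum_const,
          nsmul_eq_mul]
        ring

theorem Fin.card_filter_sub_le_val {n k : ℕ} (hkn : k ≤ n) :
    #(univ.filter fun i : Fin n ↦ n - k ≤ (i : ℕ)) = k := by
  rw [← card_map Fin.valEmbedding]
  have : (univ.filter fun i : Fin n ↦ n - k ≤ (i : ℕ)).map Fin.valEmbedding = Ico (n - k) n := by
    ext m
    simp only [mem_map, mem_filter, mem_univ, true_and, Fin.valEmbedding_apply, mem_Ico]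
    exact ⟨fun ⟨i, hi, him⟩ ↦ him ▸ ⟨hi, i.2⟩, fun ⟨hm, hmn⟩ ↦ ⟨⟨m, hmn⟩, hm, rfl⟩⟩
  rw [this, Nat.card_Ico]
  omega

theorem Monotone.sum_mul_le_sum_filter_sub_le {n k : ℕ} {μ : Fin n → ℝ} (hμ : Monotone μ)
    (hk1 : 1 ≤ k) (hkn : k ≤ n) {y : Fin n → ℝ} (hy0 : ∀ i, 0 ≤ y i) (hy1 : ∀ i, y i ≤ 1)
    (hy : ∑ i, y i = k) :
    ∑ i, μ i * y i ≤ ∑ i ∈ univ.filter (fun i : Fin n ↦ n - k ≤ (i : ℕ)), μ i := by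
  refine sum_mul_le_sum_of_threshold _ (t := μ ⟨n - k, by omega⟩) (fun i hi ↦ hμ ?_)
    (fun i hi ↦ hμ ?_) hy0 hy1 (by rw [hy, Fin.card_filter_sub_le_val hkn])
  · simpa [Fin.le_def] using hi
  · simp only [mem_filter, mem_univ, true_and, not_le] at hi
    change (i : ℕ) ≤ n - k
    omega

namespace Matrix

variable {ι R : Type*} [Fintype ι] [DecidableEq ι] [CommRing R]

theorem trace_diagonal_mul (d : ι → R) (x : Matrix ι ι R) :
    (diagonal d * x).trace = ∑ i, d i * x i i := by
  simp only [trace, diag_apply, diagonal_mul]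

variable [StarRing R]

theorem trace_conjStarAlgAut (u : unitary (Matrix ι ι R)) (x : Matrix ι ι R) :
    (Unitary.conjStarAlgAut R _ u x).trace = x.trace := by
  rw [Unitary.conjStarAlgAut_apply, trace_mul_cycle, Unitary.coe_star_mul_self, one_mul]

theorem PosSemidef.conjStarAlgAut [PartialOrder R] {x : Matrix ι ι R} (hx : x.PosSemidef)
    (u : unitary (Matrix ι ι R)) : (Unitary.conjStarAlgAut R _ u x).PosSemidef := by
  simpa only [Unitary.conjStarAlgAut_apply, star_eq_conjTranspose] using
    hx.mul_mul_conjTranspose_same (u : Matrix ι ι R)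

namespace IsHermitian

variable {A : Matrix ι ι ℝ} (hA : A.IsHermitian)
include hA

theorem trace_mul_conjStarAlgAut_eigenvectorUnitary (Y : Matrix ι ι ℝ) :
    (A * Unitary.conjStarAlgAut ℝ _ hA.eigenvectorUnitary Y).trace =
      ∑ j, hA.eigenvalues j * Y j j := by
  set φ := Unitary.conjStarAlgAut ℝ (Matrix ι ι ℝ) hA.eigenvectorUnitary
  have hAφ : A = φ (diagonal (RCLike.ofReal ∘ hA.eigenvalues)) := hA.spectral_theorem
  calc (A * φ Y).trace = (φ (diagonal (RCLike.ofReal ∘ hA.eigenvalues) * Y)).trace := by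
        rw [map_mul, ← hAφ]
    _ = ∑ j, hA.eigenvalues j * Y j j := by
        rw [trace_conjStarAlgAut, trace_diagonal_mul]
        rfl

theorem exists_trace_mul_eq_sum_eigenvalues (s : Finset ι) :
    ∃ X : Matrix ι ι ℝ, X.PosSemidef ∧ (1 - X).PosSemidef ∧ X.trace = #s ∧
      (A * X).trace = ∑ j ∈ s, hA.eigenvalues j := by
  set c : ι → ℝ := Set.indicator s 1
  have hc0 : 0 ≤ c := Set.indicator_nonneg fun _ _ ↦ zero_le_one
  have hc1 : 0 ≤ 1 - c := sub_nonneg.mpr (Set.indicator_le_self' fun _ _ ↦ zero_le_one)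
  refine ⟨Unitary.conjStarAlgAut ℝ _ hA.eigenvectorUnitary (diagonal c),
    (PosSemidef.diagonal hc0).conjStarAlgAut _, ?_, ?_, ?_⟩
  · rw [← map_one (Unitary.conjStarAlgAut ℝ _ hA.eigenvectorUnitary), ← map_sub,
      ← diagonal_one', diagonal_sub]
    exact (PosSemidef.diagonal hc1).conjStarAlgAut _
  · rw [trace_conjStarAlgAut, trace_diagonal]
    simp [c, Set.indicator_apply]
  · rw [hA.trace_mul_conjStarAlgAut_eigenvectorUnitary]
    simp [c, Set.indicator_apply, Finset.sum_ite_mem]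

theorem exists_sum_eigenvalues_mul_eq_trace_mul {X : Matrix ι ι ℝ} (hX : X.PosSemidef)
    (hIX : (1 - X).PosSemidef) :
    ∃ y : ι → ℝ, (∀ j, 0 ≤ y j) ∧ (∀ j, y j ≤ 1) ∧ ∑ j, y j = X.trace ∧
      (A * X).trace = ∑ j, hA.eigenvalues j * y j := by
  set φ := Unitary.conjStarAlgAut ℝ (Matrix ι ι ℝ) hA.eigenvectorUnitary
  have hY : (φ.symm X).PosSemidef := by
    rw [Unitary.conjStarAlgAut_symm]; exact hX.conjStarAlgAut _
  have hIY : (1 - φ.symm X).PosSemidef := by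
    rw [← map_one φ.symm, ← map_sub, Unitary.conjStarAlgAut_symm]; exact hIX.conjStarAlgAut _
  refine ⟨fun j ↦ φ.symm X j j, fun j ↦ hY.diag_nonneg, fun j ↦ ?_, ?_, ?_⟩
  · simpa using hIY.diag_nonneg (i := j)
  · change (φ.symm X).trace = X.trace
    rw [Unitary.conjStarAlgAut_symm, trace_conjStarAlgAut]
  · conv_lhs => rw [← φ.apply_symm_apply X]
    exact hA.trace_mul_conjStarAlgAut_eigenvectorUnitary _

end IsHermitian

end Matrix

/-- Ky Fan: for a symmetric PSD matrix `M`, the sum of the `k` largest eigenvalues equals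
the maximum of `tr(MX)` over symmetric `X` with `0 ⪯ X ⪯ I` and `tr X = k`. -/
theorem kyFan_sum_largest_eigenvalues
    {n : ℕ} (M : Matrix (Fin n) (Fin n) ℝ) (hM : M.PosSemidef)
    (k : ℕ) (hk1 : 1 ≤ k) (hkn : k ≤ n)
    (μ : Fin n → ℝ) (hmono : Monotone μ)
    (σ : Equiv.Perm (Fin n)) (hμ : μ = hM.1.eigenvalues ∘ σ) :
    IsGreatest
      {t : ℝ | ∃ X : Matrix (Fin n) (Fin n) ℝ,
        X.PosSemidef ∧ (1 - X).PosSemidef ∧ X.trace = (k : ℝ) ∧ t = (M * X).trace}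
      (∑ i ∈ Finset.univ.filter (fun i : Fin n => n - k ≤ (i : ℕ)), μ i) := by
  subst hμ
  constructor
  · obtain ⟨X, hX, hIX, htr, hMX⟩ := hM.1.exists_trace_mul_eq_sum_eigenvalues
      ((univ.filter fun i : Fin n ↦ n - k ≤ (i : ℕ)).map σ.toEmbedding)
    refine ⟨X, hX, hIX, by rw [htr, card_map, Fin.card_filter_sub_le_val hkn], ?_⟩
    rw [hMX, sum_map]
    rfl
  · rintro _ ⟨X, hX, hIX, htr, rfl⟩
    obtain ⟨y, hy0, hy1, hy, hMX⟩ := hM.1.exists_sum_eigenvalues_mul_eq_trace_mul hX hIX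
    rw [hMX, ← Equiv.sum_comp σ]
    exact hmono.sum_mul_le_sum_filter_sub_le hk1 hkn (fun i ↦ hy0 (σ i)) (fun i ↦ hy1 (σ i))
      (by rw [Equiv.sum_comp σ y, hy, htr])
end

section
/- Let G be a graph whose Laplacian L satisfies L*(Eᵢ) = γᵢ𝟙 with γᵢ > 0 for all nonzero eigenprojectors Eᵢ. Then for each j ∈ [r−1], the pair X_j = Σ_{i=r−j+1}^r Eᵢ together with x_j = Σ_{i=r−j+1}^r γᵢ is feasible for the dual SDP (L*(X) ≥ x𝟙, 0 ⪯ X ⪯ I, tr X = k_j), and Y_j = Σ_{i=r−j+1}^r (λᵢ − λ_{r−j})Eᵢ with y_j = λ_{r−j} and w = 𝟙 is feasible for the primal, and these satisfy complementary slackness: X_j(Y_j + y_jI − L) = 0, X_jY_j = Y_j, and ⟨L*(X_j) − x_j𝟙, 𝟙⟩ = 0. Consequently 𝟙 minimizes S_{k_j}(w) over Δ_E. -/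
/-!
`X_j` is the spectral projection of `L` onto its top `j` eigenspaces. Since `L*(Eᵢ) = γᵢ𝟙`
for every `Eᵢ` in it, `L*(X_j)` is the constant `x_j` on edges, so `tr (X_j 𝓛(w)) = x_j |E|`
for every `w ∈ Δ_E`. By the bathtub principle `X_j` maximizes `tr (Q L)` over `0 ⪯ Q ⪯ I` with
`tr Q = k_j`, so `S_{k_j}(L) ≤ tr (X_j L) = tr (X_j 𝓛(𝟙))`, while Ky Fan's inequality bounds
`tr (X_j 𝓛(w)) ≤ S_{k_j}(𝓛(w))`. Feasibility and complementary slackness are identities in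
the commutative algebra spanned by the `Eᵢ`.
-/

open Matrix Finset

/-- The eigenvalues of a matrix (junk value if not Hermitian). -/
noncomputable def eigs {n : ℕ} (M : Matrix (Fin n) (Fin n) ℝ) : Fin n → ℝ :=
  if h : M.IsHermitian then h.eigenvalues else 0

/-- The sum of the `k` smallest eigenvalues of `M`. -/
noncomputable def sumSmallest {n : ℕ} (M : Matrix (Fin n) (Fin n) ℝ) (k : ℕ) : ℝ :=
  sInf {t : ℝ | ∃ s : Finset (Fin n), s.card = k ∧ t = ∑ i ∈ s, eigs M i}

/-- The sum of the `k` largest eigenvalues of `M`. -/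
noncomputable def sumLargest {n : ℕ} (M : Matrix (Fin n) (Fin n) ℝ) (k : ℕ) : ℝ :=
  sSup {t : ℝ | ∃ s : Finset (Fin n), s.card = k ∧ t = ∑ i ∈ s, eigs M i}

/-- The weighted Laplacian `𝓛(w) = Σ_{ab∈E} w_{ab}(e_a−e_b)(e_a−e_b)ᵀ`, written entrywise
for a symmetric weight function supported on the edges. -/
def wLap {n : ℕ} (w : Fin n → Fin n → ℝ) : Matrix (Fin n) (Fin n) ℝ :=
  Matrix.of fun i j => if i = j then ∑ k, w i k else -(w i j)

/-- `w` is a valid nonnegative symmetric weight function supported on the edges of `G`. -/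
def ValidWeight {n : ℕ} (G : SimpleGraph (Fin n)) (w : Fin n → Fin n → ℝ) : Prop :=
  (∀ i j, w i j = w j i) ∧ (∀ i j, ¬ G.Adj i j → w i j = 0) ∧ (∀ i j, 0 ≤ w i j)

/-- `w` lies in the simplex `Δ_E = {w ≥ 0 : 𝟙ᵀw = |E|}` (edge sums counted twice as
ordered pairs). -/
def InSimplex {n : ℕ} (G : SimpleGraph (Fin n)) [DecidableRel G.Adj]
    (w : Fin n → Fin n → ℝ) : Prop :=
  ValidWeight G w ∧ ∑ i, ∑ j, w i j = 2 * G.edgeFinset.card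

theorem smul_add_sum_smul_sub_sum_smul {ι R : Type*} [Fintype ι] [DecidableEq ι] [AddCommGroup R]
    [Module ℝ R] {E : ι → R} {u : R} (hEsum : ∑ i, E i = u) (T : Finset ι) (lam : ι → ℝ)
    (c : ℝ) : c • u + ∑ i ∈ T, (lam i - c) • E i - ∑ i, lam i • E i =
      ∑ i ∈ Tᶜ, (c - lam i) • E i := by
  rw [← hEsum, Finset.smul_sum, ← Finset.sum_add_sum_compl T fun i => lam i • E i,
    ← Finset.sum_add_sum_compl T fun i => c • E i]
  simp only [sub_smul, Finset.sum_sub_distrib]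
  abel

namespace Matrix

variable {m ι : Type*}

theorem isSymm_sum {E : ι → Matrix m m ℝ} {s : Finset ι} (hE : ∀ i ∈ s, (E i).IsSymm) :
    (∑ i ∈ s, E i).IsSymm := by
  rw [IsSymm, transpose_sum]
  exact Finset.sum_congr rfl hE

variable [Fintype m]

theorem posSemidef_of_isSymm_of_mul_self {P : Matrix m m ℝ} (hs : P.IsSymm) (hP : P * P = P) :
    P.PosSemidef := by
  have h : Pᴴ * P = P := by rw [conjTranspose_eq_transpose_of_trivial, hs, hP]
  exact h ▸ posSemidef_conjTranspose_mul_self P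

theorem PosSemidef.trace_mul_nonneg_of_isSymm_of_mul_self {A P : Matrix m m ℝ}
    (hA : A.PosSemidef) (hs : P.IsSymm) (hP : P * P = P) : 0 ≤ (A * P).trace := by
  have h : (A * P).trace = (Pᴴ * A * P).trace := by
    rw [conjTranspose_eq_transpose_of_trivial, hs, ← trace_mul_cycle, Matrix.mul_assoc, hP]
  exact h ▸ (hA.conjTranspose_mul_mul_same P).trace_nonneg

theorem le_card_of_posSemidef_one_sub [DecidableEq m] {X : Matrix m m ℝ}
    (hX : (1 - X).PosSemidef) {k : ℕ} (hk : X.trace = k) : k ≤ Fintype.card m := by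
  have h := hX.trace_nonneg
  rw [trace_sub, trace_one, hk] at h
  exact_mod_cast sub_nonneg.mp h

section OrthogonalProjections

variable [DecidableEq ι] {E : ι → Matrix m m ℝ}

theorem sum_mul_of_orthogonal (hE : ∀ i j, E i * E j = if i = j then E i else 0)
    (T : Finset ι) (p : ι) : (∑ i ∈ T, E i) * E p = if p ∈ T then E p else 0 := by
  rw [Finset.sum_mul, Finset.sum_congr rfl fun i _ => hE i p, Finset.sum_ite_eq']

theorem sum_mul_sum_smul_of_orthogonal (hE : ∀ i j, E i * E j = if i = j then E i else 0)
    (T s : Finset ι) (c : ι → ℝ) :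
    (∑ i ∈ T, E i) * ∑ i ∈ s, c i • E i = ∑ i ∈ s ∩ T, c i • E i := by
  simp_rw [Finset.mul_sum, Matrix.mul_smul, sum_mul_of_orthogonal hE, smul_ite, smul_zero]
  rw [← Finset.sum_filter, Finset.filter_mem_eq_inter]

theorem sum_mul_self_of_orthogonal (hE : ∀ i j, E i * E j = if i = j then E i else 0)
    (T : Finset ι) : (∑ i ∈ T, E i) * (∑ i ∈ T, E i) = ∑ i ∈ T, E i := by
  rw [Finset.mul_sum]
  exact Finset.sum_congr rfl fun p hp => by rw [sum_mul_of_orthogonal hE, if_pos hp]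

theorem posSemidef_sum_of_orthogonal (hEs : ∀ i, (E i).IsSymm)
    (hE : ∀ i j, E i * E j = if i = j then E i else 0) (T : Finset ι) :
    (∑ i ∈ T, E i).PosSemidef :=
  posSemidef_of_isSymm_of_mul_self (isSymm_sum fun i _ => hEs i) (sum_mul_self_of_orthogonal hE T)

theorem posSemidef_sum_smul_of_orthogonal (hEs : ∀ i, (E i).IsSymm)
    (hE : ∀ i j, E i * E j = if i = j then E i else 0) {s : Finset ι} {c : ι → ℝ}
    (hc : ∀ i ∈ s, 0 ≤ c i) : (∑ i ∈ s, c i • E i).PosSemidef :=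
  posSemidef_sum s fun i hi =>
    (posSemidef_of_isSymm_of_mul_self (hEs i) (by simpa using hE i i)).smul (hc i hi)

variable [Fintype ι] [DecidableEq m]

theorem posSemidef_one_sub_sum_of_orthogonal (hEs : ∀ i, (E i).IsSymm)
    (hE : ∀ i j, E i * E j = if i = j then E i else 0) (hEsum : ∑ i, E i = 1) (T : Finset ι) :
    (1 - ∑ i ∈ T, E i).PosSemidef := by
  rw [← hEsum, ← Finset.sum_add_sum_compl T E, add_sub_cancel_left]
  exact posSemidef_sum_of_orthogonal hEs hE Tᶜ

end OrthogonalProjections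

end Matrix

/-- The bathtub principle. -/
theorem Finset.sum_mul_le_sum_mul_of_threshold {ι : Type*} [Fintype ι] {f t μ : ι → ℝ}
    {S : Finset ι} {c : ℝ} (ht : ∀ i, 0 ≤ t i) (htμ : ∀ i ∈ S, t i ≤ μ i)
    (hlo : ∀ i ∉ S, f i ≤ c) (hhi : ∀ i ∈ S, c ≤ f i) (hmass : ∑ i, t i = ∑ i ∈ S, μ i) :
    ∑ i, f i * t i ≤ ∑ i ∈ S, f i * μ i := by
  classical
  have hout : ∑ i ∈ Sᶜ, (f i - c) * t i ≤ 0 :=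
    Finset.sum_nonpos fun i hi =>
      mul_nonpos_of_nonpos_of_nonneg (sub_nonpos.2 (hlo i (Finset.mem_compl.1 hi))) (ht i)
  have hin : ∑ i ∈ S, (f i - c) * t i ≤ ∑ i ∈ S, (f i - c) * μ i :=
    Finset.sum_le_sum fun i hi => mul_le_mul_of_nonneg_left (htμ i hi) (sub_nonneg.2 (hhi i hi))
  have hshift : ∀ (s : Finset ι) (g : ι → ℝ),
      ∑ i ∈ s, f i * g i = ∑ i ∈ s, (f i - c) * g i + c * ∑ i ∈ s, g i := fun s g => by
    rw [Finset.mul_sum, ← Finset.sum_add_distrib]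
    exact Finset.sum_congr rfl fun i _ => by ring
  rw [hshift, hshift, hmass, ← Finset.sum_add_sum_compl S]
  linarith

theorem exists_card_eq_sum_mul_le {α : Type*} [Fintype α] (d t : α → ℝ) {k : ℕ}
    (hk : k ≤ Fintype.card α) (ht0 : ∀ i, 0 ≤ t i) (ht1 : ∀ i, t i ≤ 1) (hmass : ∑ i, t i = k) :
    ∃ s : Finset α, s.card = k ∧ ∑ i, d i * t i ≤ ∑ i ∈ s, d i := by
  classical
  have hne : (Finset.univ.powersetCard k : Finset (Finset α)).Nonempty :=
    Finset.powersetCard_nonempty.2 (by simpa using hk)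
  obtain ⟨s, hs, hmax⟩ := Finset.exists_max_image _ (fun s => ∑ i ∈ s, d i) hne
  have hcard : s.card = k := (Finset.mem_powersetCard.1 hs).2
  refine ⟨s, hcard, ?_⟩
  rcases s.eq_empty_or_nonempty with rfl | hsne
  · have ht : ∀ i, t i = 0 := fun i =>
      (Finset.sum_eq_zero_iff_of_nonneg fun i _ => ht0 i).1
        (by rw [hmass, ← hcard, Finset.card_empty, Nat.cast_zero]) i (Finset.mem_univ i)
    simp [ht]
  obtain ⟨i₀, hi₀, hmin⟩ := Finset.exists_min_image s d hsne
  -- exchanging `i₀` for an outside index cannot increase the sum, by maximality of `s`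
  have hlo : ∀ i ∉ s, d i ≤ d i₀ := fun i hi => by
    have hi' : i ∉ s.erase i₀ := fun h => hi (Finset.mem_of_mem_erase h)
    have hmem : insert i (s.erase i₀) ∈ Finset.univ.powersetCard k := by
      rw [Finset.mem_powersetCard, Finset.card_insert_of_notMem hi',
        Finset.card_erase_of_mem hi₀, hcard]
      exact ⟨Finset.subset_univ _, Nat.sub_add_cancel (hcard ▸ hsne.card_pos)⟩
    have := hmax _ hmem
    rw [Finset.sum_insert hi', Finset.sum_erase_eq_sub hi₀] at this
    linarith
  simpa using Finset.sum_mul_le_sum_mul_of_threshold (μ := fun _ => 1) ht0 (fun i _ => ht1 i)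
    hlo hmin (by simp [hmass, hcard])

namespace Matrix

theorem IsHermitian.trace_mul_eq_sum_eigenvalues {m : Type*} [Fintype m] [DecidableEq m]
    {M : Matrix m m ℝ} (hM : M.IsHermitian) (X : Matrix m m ℝ) :
    (X * M).trace = ∑ i, hM.eigenvalues i * (star (hM.eigenvectorUnitary : Matrix m m ℝ) * X *
      (hM.eigenvectorUnitary : Matrix m m ℝ)) i i := by
  set U : Matrix m m ℝ := (hM.eigenvectorUnitary : Matrix m m ℝ)
  have hspec : M = U * diagonal hM.eigenvalues * star U := by
    simpa [Unitary.conjStarAlgAut_apply] using hM.spectral_theorem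
  conv_lhs => rw [hspec, ← Matrix.mul_assoc, ← Matrix.mul_assoc, trace_mul_cycle,
    ← Matrix.mul_assoc]
  simp only [trace, diag, mul_diagonal, mul_comm]

end Matrix

section KyFan

variable {n : ℕ}

theorem eigs_eq_eigenvalues {M : Matrix (Fin n) (Fin n) ℝ} (hM : M.IsHermitian) :
    eigs M = hM.eigenvalues :=
  dif_pos hM

theorem le_sumLargest (M : Matrix (Fin n) (Fin n) ℝ) (s : Finset (Fin n)) :
    ∑ i ∈ s, eigs M i ≤ sumLargest M s.card := by
  refine le_csSup ?_ ⟨s, rfl, rfl⟩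
  refine (Set.finite_range fun s : Finset (Fin n) => ∑ i ∈ s, eigs M i).subset ?_ |>.bddAbove
  rintro _ ⟨s, -, rfl⟩
  exact ⟨s, rfl⟩

theorem sumLargest_le {M : Matrix (Fin n) (Fin n) ℝ} {k : ℕ} (hk : k ≤ n) {c : ℝ}
    (h : ∀ s : Finset (Fin n), s.card = k → ∑ i ∈ s, eigs M i ≤ c) : sumLargest M k ≤ c := by
  obtain ⟨s, -, hs⟩ :=
    Finset.exists_subset_card_eq (s := (Finset.univ : Finset (Fin n))) (by simpa using hk)
  refine csSup_le ⟨_, s, hs, rfl⟩ ?_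
  rintro _ ⟨s, hs, rfl⟩
  exact h s hs

/-- Ky Fan's inequality. -/
theorem trace_mul_le_sumLargest {M X : Matrix (Fin n) (Fin n) ℝ} (hM : M.IsHermitian)
    (hX : X.PosSemidef) (hX1 : (1 - X).PosSemidef) {k : ℕ} (hk : X.trace = k) :
    (X * M).trace ≤ sumLargest M k := by
  set U : Matrix (Fin n) (Fin n) ℝ := (hM.eigenvectorUnitary : Matrix (Fin n) (Fin n) ℝ)
  have hUU : star U * U = 1 := Unitary.coe_star_mul_self _
  have hUU' : U * star U = 1 := Unitary.coe_mul_star_self _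
  have hY : (star U * X * U).PosSemidef := by
    simpa only [star_eq_conjTranspose] using hX.conjTranspose_mul_mul_same U
  have hY1 : (1 - star U * X * U).PosSemidef := by
    have h : star U * (1 - X) * U = 1 - star U * X * U := by
      rw [Matrix.mul_sub, Matrix.mul_one, Matrix.sub_mul, hUU]
    rw [← h, star_eq_conjTranspose]
    exact hX1.conjTranspose_mul_mul_same U
  have hmass : ∑ i, (star U * X * U) i i = k := by
    change (star U * X * U).trace = k
    rw [← hk, ← trace_mul_cycle, Matrix.mul_assoc, hUU', Matrix.mul_one]
  obtain ⟨s, rfl, hs⟩ := exists_card_eq_sum_mul_le hM.eigenvalues (fun i => (star U * X * U) i i)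
    (Matrix.le_card_of_posSemidef_one_sub hX1 hk) (fun i => hY.diag_nonneg)
    (fun i => by simpa using hY1.diag_nonneg (i := i)) hmass
  rw [hM.trace_mul_eq_sum_eigenvalues]
  exact hs.trans (eigs_eq_eigenvalues hM ▸ le_sumLargest M s)

theorem exists_posSemidef_trace_mul_eq_sum_eigs {M : Matrix (Fin n) (Fin n) ℝ}
    (hM : M.IsHermitian) (s : Finset (Fin n)) :
    ∃ P : Matrix (Fin n) (Fin n) ℝ, P.PosSemidef ∧ (1 - P).PosSemidef ∧
      P.trace = s.card ∧ (P * M).trace = ∑ i ∈ s, eigs M i := by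
  classical
  set U : Matrix (Fin n) (Fin n) ℝ := (hM.eigenvectorUnitary : Matrix (Fin n) (Fin n) ℝ)
  have hUU : star U * U = 1 := Unitary.coe_star_mul_self _
  have hUU' : U * star U = 1 := Unitary.coe_mul_star_self _
  set e : Fin n → ℝ := fun i => if i ∈ s then 1 else 0
  have hpsd : ∀ d : Fin n → ℝ, (∀ i, 0 ≤ d i) → (U * diagonal d * star U).PosSemidef :=
    fun d hd => by
      simpa only [star_eq_conjTranspose] using
        (PosSemidef.diagonal hd).mul_mul_conjTranspose_same U
  have hcompl : 1 - U * diagonal e * star U = U * diagonal (fun i => 1 - e i) * star U := by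
    rw [← diagonal_sub, diagonal_one, Matrix.mul_sub, Matrix.sub_mul, Matrix.mul_one, hUU']
  have hconj : star U * (U * diagonal e * star U) * U = diagonal e := by
    simp only [← Matrix.mul_assoc, hUU, Matrix.one_mul]
    rw [Matrix.mul_assoc, hUU, Matrix.mul_one]
  refine ⟨U * diagonal e * star U, hpsd e fun i => ?_,
    hcompl ▸ hpsd (fun i => 1 - e i) fun i => ?_, ?_, ?_⟩
  · by_cases h : i ∈ s <;> simp [e, h]
  · by_cases h : i ∈ s <;> simp [e, h]
  · rw [trace_mul_cycle, hUU, Matrix.one_mul, trace_diagonal]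
    simp [e]
  · rw [hM.trace_mul_eq_sum_eigenvalues, hconj, eigs_eq_eigenvalues hM]
    simp [e, diagonal_apply_eq]

end KyFan

section SpectralResolution

variable {m ι : Type*} [Fintype m] [Fintype ι]

theorem trace_mul_sum_smul (A : Matrix m m ℝ) (E : ι → Matrix m m ℝ) (lam : ι → ℝ) :
    (A * ∑ i, lam i • E i).trace = ∑ i, lam i * (A * E i).trace := by
  simp only [Matrix.mul_sum, Matrix.mul_smul, Matrix.trace_sum, Matrix.trace_smul, smul_eq_mul]

variable [DecidableEq m] [DecidableEq ι] {E : ι → Matrix m m ℝ}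

/-- The weights `tr (Q Eᵢ)` lie in `[0, tr Eᵢ]` and sum to `tr Q`, so this is the bathtub
principle. -/
theorem trace_mul_le_trace_sum_mul_of_threshold (hEs : ∀ i, (E i).IsSymm)
    (hE : ∀ i j, E i * E j = if i = j then E i else 0) (hEsum : ∑ i, E i = 1)
    {lam : ι → ℝ} {T : Finset ι} {c : ℝ} (hlo : ∀ i ∉ T, lam i ≤ c) (hhi : ∀ i ∈ T, c ≤ lam i)
    {Q : Matrix m m ℝ} (hQ : Q.PosSemidef) (hQ1 : (1 - Q).PosSemidef)
    (htr : Q.trace = (∑ i ∈ T, E i).trace) :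
    (Q * ∑ i, lam i • E i).trace ≤ ((∑ i ∈ T, E i) * ∑ i, lam i • E i).trace := by
  have hEE : ∀ i, E i * E i = E i := fun i => by simpa using hE i i
  have hRHS : ((∑ i ∈ T, E i) * ∑ i, lam i • E i).trace = ∑ i ∈ T, lam i * (E i).trace := by
    rw [trace_mul_sum_smul]
    simp only [Matrix.sum_mul_of_orthogonal hE, apply_ite Matrix.trace, Matrix.trace_zero,
      mul_ite, mul_zero, Finset.sum_ite_mem, Finset.univ_inter]
  rw [hRHS, trace_mul_sum_smul]
  refine Finset.sum_mul_le_sum_mul_of_threshold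
    (fun i => hQ.trace_mul_nonneg_of_isSymm_of_mul_self (hEs i) (hEE i)) (fun i _ => ?_) hlo hhi ?_
  · have h := hQ1.trace_mul_nonneg_of_isSymm_of_mul_self (hEs i) (hEE i)
    rw [Matrix.sub_mul, Matrix.one_mul, Matrix.trace_sub] at h
    linarith
  · rw [← Matrix.trace_sum, ← Matrix.mul_sum, hEsum, Matrix.mul_one, htr, Matrix.trace_sum]

theorem sumLargest_sum_smul_le_of_threshold {n : ℕ} {E : ι → Matrix (Fin n) (Fin n) ℝ}
    (hEs : ∀ i, (E i).IsSymm) (hE : ∀ i j, E i * E j = if i = j then E i else 0)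
    (hEsum : ∑ i, E i = 1) {lam : ι → ℝ} {T : Finset ι} {c : ℝ} (hlo : ∀ i ∉ T, lam i ≤ c)
    (hhi : ∀ i ∈ T, c ≤ lam i) {k : ℕ} (hk : (∑ i ∈ T, E i).trace = k) :
    sumLargest (∑ i, lam i • E i) k ≤ ((∑ i ∈ T, E i) * ∑ i, lam i • E i).trace := by
  have hM : (∑ i, lam i • E i).IsHermitian :=
    isHermitian_iff_isSymm.2 (Matrix.isSymm_sum fun i _ => (hEs i).smul _)
  have hP1 := Matrix.posSemidef_one_sub_sum_of_orthogonal hEs hE hEsum T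
  refine sumLargest_le (by simpa using Matrix.le_card_of_posSemidef_one_sub hP1 hk) fun s hs => ?_
  obtain ⟨Q, hQ, hQ1, hQtr, hQM⟩ := exists_posSemidef_trace_mul_eq_sum_eigs hM s
  rw [← hQM]
  exact trace_mul_le_trace_sum_mul_of_threshold hEs hE hEsum hlo hhi hQ hQ1 (by rw [hQtr, hs, hk])

end SpectralResolution

section WeightedLaplacian

variable {n : ℕ}

theorem wLap_eq_diagonal_sub {w : Fin n → Fin n → ℝ} (hdiag : ∀ a, w a a = 0) :
    wLap w = diagonal (fun a => ∑ b, w a b) - Matrix.of w := by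
  ext a b
  by_cases h : a = b
  · subst h; simp [wLap, hdiag]
  · simp [wLap, h]

theorem two_mul_trace_mul_wLap (X : Matrix (Fin n) (Fin n) ℝ)
    {w : Fin n → Fin n → ℝ} (hsym : ∀ a b, w a b = w b a) (hdiag : ∀ a, w a a = 0) :
    2 * (X * wLap w).trace = ∑ a, ∑ b, w a b * (X a a + X b b - 2 * X a b) := by
  have htr : (X * wLap w).trace = ∑ a, ∑ b, w a b * X a a - ∑ a, ∑ b, w a b * X a b := by
    rw [wLap_eq_diagonal_sub hdiag, Matrix.mul_sub, trace_sub]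
    congr 1
    · simp [trace, Finset.mul_sum, mul_comm]
    · simp only [trace, Matrix.diag, mul_apply, of_apply]
      exact Finset.sum_congr rfl fun a _ => Finset.sum_congr rfl fun b _ => by
        rw [hsym, mul_comm]
  have hswap : ∑ a, ∑ b, w a b * X b b = ∑ a, ∑ b, w a b * X a a := by
    rw [Finset.sum_comm]
    exact Finset.sum_congr rfl fun a _ => Finset.sum_congr rfl fun b _ => by rw [hsym]
  calc 2 * (X * wLap w).trace
      = ∑ a, ∑ b, w a b * X a a + ∑ a, ∑ b, w a b * X b b - 2 * ∑ a, ∑ b, w a b * X a b := by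
        rw [htr, hswap]; ring
    _ = ∑ a, ∑ b, w a b * (X a a + X b b - 2 * X a b) := by
        simp only [Finset.mul_sum, ← Finset.sum_add_distrib, ← Finset.sum_sub_distrib]
        exact Finset.sum_congr rfl fun a _ => Finset.sum_congr rfl fun b _ => by ring

theorem isHermitian_wLap {w : Fin n → Fin n → ℝ} (hsym : ∀ a b, w a b = w b a) :
    (wLap w).IsHermitian := by
  refine isHermitian_iff_isSymm.2 (IsSymm.ext fun a b => ?_)
  by_cases h : a = b
  · subst h; rfl
  · simp [wLap, h, Ne.symm h, hsym a b]

variable (G : SimpleGraph (Fin n)) [DecidableRel G.Adj]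

theorem sum_adj_indicator (a : Fin n) :
    ∑ b, (if G.Adj a b then (1 : ℝ) else 0) = G.degree a := by
  rw [Finset.sum_boole, SimpleGraph.degree, SimpleGraph.neighborFinset_eq_filter]

theorem wLap_adj_indicator :
    wLap (fun a b => if G.Adj a b then (1 : ℝ) else 0) = G.lapMatrix ℝ := by
  ext a b
  by_cases h : a = b
  · subst h
    rw [wLap, of_apply, if_pos rfl, sum_adj_indicator]
    simp [SimpleGraph.lapMatrix, SimpleGraph.degMatrix]
  · simp [wLap, SimpleGraph.lapMatrix, SimpleGraph.degMatrix, SimpleGraph.adjMatrix, h]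

theorem inSimplex_adj_indicator : InSimplex G (fun a b => if G.Adj a b then (1 : ℝ) else 0) := by
  refine ⟨⟨fun a b => by simp only [G.adj_comm], fun a b h => if_neg h,
    fun a b => ite_nonneg zero_le_one le_rfl⟩, ?_⟩
  simp only [sum_adj_indicator]
  exact_mod_cast (G.sum_degrees_eq_twice_card_edges).trans (by ring)

variable {G}

theorem trace_mul_wLap_of_forall_adj {X : Matrix (Fin n) (Fin n) ℝ} {x : ℝ}
    (hX : ∀ a b, G.Adj a b → X a a + X b b - 2 * X a b = x) {w : Fin n → Fin n → ℝ}
    (hw : InSimplex G w) : (X * wLap w).trace = x * G.edgeFinset.card := by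
  obtain ⟨⟨hsym, hsupp, -⟩, hmass⟩ := hw
  have h := two_mul_trace_mul_wLap X hsym fun a => hsupp a a (G.loopless.irrefl a)
  have hterm : ∀ a b, w a b * (X a a + X b b - 2 * X a b) = x * w a b := fun a b => by
    by_cases hab : G.Adj a b
    · rw [hX a b hab, mul_comm]
    · rw [hsupp a b hab, zero_mul, mul_zero]
  simp only [hterm, ← Finset.mul_sum, hmass] at h
  linarith

end WeightedLaplacian

/-- If the Laplacian `L = Σ λᵢEᵢ` of `G` satisfies `L*(Eᵢ) = γᵢ𝟙` with `γᵢ > 0` for all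
nonzero eigenprojectors, then for each `j ∈ [r−1]` the pair `(X_j, x_j)` is feasible for
the dual SDP, `(Y_j, y_j, 𝟙)` is feasible for the primal, they satisfy complementary
slackness, and consequently the uniform weight minimizes `S_{k_j}` over `Δ_E`. -/
theorem dual_certificate_upper_rigidity
    {n : ℕ} (G : SimpleGraph (Fin n)) [DecidableRel G.Adj]
    {r : ℕ} (lam : Fin r → ℝ) (hlam : StrictMono lam)
    (E : Fin r → Matrix (Fin n) (Fin n) ℝ)
    (hEsymm : ∀ i, (E i).IsSymm)
    (hEorth : ∀ i j, E i * E j = if i = j then E i else 0)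
    (hEsum : ∑ i, E i = 1)
    (hdecomp : G.lapMatrix ℝ = ∑ i, lam i • E i)
    (m : Fin r → ℕ) (hm : ∀ i, (E i).trace = (m i : ℝ))
    (γ : Fin r → ℝ)
    (hγ : ∀ i : Fin r, 1 ≤ (i : ℕ) → ∀ a b : Fin n, G.Adj a b →
      (E i) a a + (E i) b b - 2 * (E i) a b = γ i)
    (j : ℕ) (hj1 : 1 ≤ j) (hjr : j ≤ r - 1)
    (kj : ℕ) (hkj : kj = ∑ i ∈ Finset.univ.filter (fun i : Fin r => r - j ≤ (i : ℕ)), m i)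
    (Xj : Matrix (Fin n) (Fin n) ℝ)
    (hXj : Xj = ∑ i ∈ Finset.univ.filter (fun i : Fin r => r - j ≤ (i : ℕ)), E i)
    (xj : ℝ)
    (hxj : xj = ∑ i ∈ Finset.univ.filter (fun i : Fin r => r - j ≤ (i : ℕ)), γ i)
    (yj : ℝ) (hyj : yj = lam ⟨r - j - 1, by omega⟩)
    (Yj : Matrix (Fin n) (Fin n) ℝ)
    (hYj : Yj = ∑ i ∈ Finset.univ.filter (fun i : Fin r => r - j ≤ (i : ℕ)),
      (lam i - lam ⟨r - j - 1, by omega⟩) • E i) :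
    -- dual feasibility of (X_j, x_j)
    ((∀ a b : Fin n, G.Adj a b → xj ≤ Xj a a + Xj b b - 2 * Xj a b) ∧
      Xj.PosSemidef ∧ (1 - Xj).PosSemidef ∧ Xj.trace = (kj : ℝ)) ∧
    -- primal feasibility of (Y_j, y_j, 𝟙)
    ((yj • (1 : Matrix (Fin n) (Fin n) ℝ) + Yj - G.lapMatrix ℝ).PosSemidef ∧
      Yj.PosSemidef ∧
      InSimplex G (fun a b => if G.Adj a b then (1 : ℝ) else 0)) ∧
    -- complementary slackness
    (Xj * (Yj + yj • (1 : Matrix (Fin n) (Fin n) ℝ) - G.lapMatrix ℝ) = 0 ∧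
      Xj * Yj = Yj ∧
      ∑ a, ∑ b, (if G.Adj a b then Xj a a + Xj b b - 2 * Xj a b - xj else 0) = 0) ∧
    -- consequently 𝟙 minimizes S_{k_j} over Δ_E
    (∀ w : Fin n → Fin n → ℝ, InSimplex G w →
      sumLargest (G.lapMatrix ℝ) kj ≤ sumLargest (wLap w) kj) := by
  set T := Finset.univ.filter (fun i : Fin r => r - j ≤ (i : ℕ))
  have hT : ∀ i, i ∈ T ↔ r - j ≤ (i : ℕ) := by simp [T]
  have hlo : ∀ i ∉ T, lam i ≤ yj := fun i hi =>
    hyj ▸ hlam.monotone (Fin.le_def.2 (by rw [hT] at hi; dsimp only; omega))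
  have hhi : ∀ i ∈ T, yj ≤ lam i := fun i hi =>
    hyj ▸ hlam.monotone (Fin.le_def.2 (by rw [hT] at hi; dsimp only; omega))
  have hY : Yj = ∑ i ∈ T, (lam i - yj) • E i := by rw [hYj, hyj]
  have hedge : ∀ a b, G.Adj a b → Xj a a + Xj b b - 2 * Xj a b = xj := fun a b hab => by
    simp only [hXj, hxj, Matrix.sum_apply, Finset.mul_sum, ← Finset.sum_add_distrib,
      ← Finset.sum_sub_distrib]
    exact Finset.sum_congr rfl fun i hi => hγ i (by rw [hT] at hi; omega) a b hab
  have hslack : yj • 1 + Yj - G.lapMatrix ℝ = ∑ i ∈ Tᶜ, (yj - lam i) • E i := by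
    rw [hY, hdecomp, smul_add_sum_smul_sub_sum_smul hEsum]
  have hXpsd : Xj.PosSemidef := hXj ▸ Matrix.posSemidef_sum_of_orthogonal hEsymm hEorth T
  have hX1psd : (1 - Xj).PosSemidef :=
    hXj ▸ Matrix.posSemidef_one_sub_sum_of_orthogonal hEsymm hEorth hEsum T
  have hXtr : Xj.trace = kj := by
    rw [hXj, Matrix.trace_sum, hkj]
    push_cast
    exact Finset.sum_congr rfl fun i _ => hm i
  refine ⟨⟨fun a b hab => (hedge a b hab).ge, hXpsd, hX1psd, hXtr⟩,
    ⟨hslack ▸ Matrix.posSemidef_sum_smul_of_orthogonal hEsymm hEorth fun i hi =>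
        sub_nonneg.2 (hlo i (Finset.mem_compl.1 hi)),
      hY ▸ Matrix.posSemidef_sum_smul_of_orthogonal hEsymm hEorth fun i hi =>
        sub_nonneg.2 (hhi i hi),
      inSimplex_adj_indicator G⟩,
    ⟨?_, ?_, ?_⟩, fun w hw => ?_⟩
  · rw [add_comm Yj, hslack, hXj, Matrix.sum_mul_sum_smul_of_orthogonal hEorth,
      Finset.inter_comm, Finset.inter_compl, Finset.sum_empty]
  · rw [hY, hXj, Matrix.sum_mul_sum_smul_of_orthogonal hEorth, Finset.inter_self]
  · refine Finset.sum_eq_zero fun a _ => Finset.sum_eq_zero fun b _ => ?_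
    split_ifs with hab
    · rw [hedge a b hab, sub_self]
    · rfl
  calc sumLargest (G.lapMatrix ℝ) kj
      ≤ (Xj * G.lapMatrix ℝ).trace := by
        rw [hdecomp, hXj]
        exact sumLargest_sum_smul_le_of_threshold hEsymm hEorth hEsum hlo hhi (hXj ▸ hXtr)
    _ = xj * G.edgeFinset.card := by
        rw [← wLap_adj_indicator]
        exact trace_mul_wLap_of_forall_adj hedge (inSimplex_adj_indicator G)
    _ = (Xj * wLap w).trace := (trace_mul_wLap_of_forall_adj hedge hw).symm
    _ ≤ sumLargest (wLap w) kj :=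
        trace_mul_le_sumLargest (isHermitian_wLap hw.1.1) hXpsd hX1psd hXtr
end
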